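/- Let X be a complex Hilbert space, P₀, S₀ densely defined linear operators in X with adjoints P = P₀*, S = S₀* satisfying the coercivity assumption, suppose the relation H is symmetric, and let (G, Γ₀, Γ₁) be a boundary triplet for ran[P;S]. Then for all linear relations Θ, Θ' ⊆ G × G, one has ran A_Θ ⊆ ran A_{Θ'} if and only if Θ ⊆ Θ'. -/
import Mathlib


open scoped ComplexInnerProductSpace

noncomputable section

/-- The adjoint of a linear relation (given as a set of pairs) in an inner product space. -/
def relAdj {Y : Type*} [NormedAddCommGroup Y] [InnerProductSpace ℂ Y]
    (T : Set (Y × Y)) : Set (Y × Y) :=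
  {g | ∀ h ∈ T, ⟪g.2, h.1⟫ = ⟪g.1, h.2⟫}

/-- A linear relation is self-adjoint if it coincides with its adjoint relation. -/
def IsSelfAdjointRel {Y : Type*} [NormedAddCommGroup Y] [InnerProductSpace ℂ Y]
    (T : Set (Y × Y)) : Prop := T = relAdj T

/-- A relation `T` is dissipative if `Re ⟪g, f⟫ ≤ 0` for all `(f, g) ∈ T`. -/
def Dissipative {Y : Type*} [NormedAddCommGroup Y] [InnerProductSpace ℂ Y]
    (T : Set (Y × Y)) : Prop := ∀ p ∈ T, (⟪p.2, p.1⟫).re ≤ 0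

/-- A relation is maximally dissipative if it is dissipative and equals every dissipative
linear relation containing it. -/
def MaxDissipative {Y : Type*} [NormedAddCommGroup Y] [InnerProductSpace ℂ Y]
    (T : Set (Y × Y)) : Prop :=
  Dissipative T ∧
    ∀ K : Submodule ℂ (Y × Y), Dissipative (K : Set (Y × Y)) → T ⊆ (K : Set (Y × Y)) →
      T = (K : Set (Y × Y))

variable {X : Type*} [NormedAddCommGroup X] [InnerProductSpace ℂ X] [CompleteSpace X]

/-- `dom[P;S] = dom P ⊓ dom S`. -/
def colDom (P S : X →ₗ.[ℂ] X) : Submodule ℂ X := P.domain ⊓ S.domain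

/-- Application of `P` on `dom[P;S]`. -/
def Pap (P S : X →ₗ.[ℂ] X) (x : colDom P S) : X := P ⟨x.1, x.2.1⟩

/-- Application of `S` on `dom[P;S]`. -/
def Sap (P S : X →ₗ.[ℂ] X) (x : colDom P S) : X := S ⟨x.1, x.2.2⟩

/-- The coercivity assumption on the column operator `[P;S]`. -/
def Coercive (P S : X →ₗ.[ℂ] X) : Prop :=
  ∃ c : ℝ, 0 < c ∧ ∀ x : colDom P S,
    c ^ 2 * ‖(x : X)‖ ^ 2 ≤ ‖Pap P S x‖ ^ 2 + ‖Sap P S x‖ ^ 2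

/-- The range of the column operator `[P;S]` as a linear relation:
`{(Px, Sx) : x ∈ dom P ⊓ dom S}`. -/
def ranPS (P S : X →ₗ.[ℂ] X) : Set (X × X) :=
  {p | ∃ x : colDom P S, p = (Pap P S x, Sap P S x)}

/-- The relation `H = {(f₁, f₂) ∈ dom S₀ × dom P₀ : S₀ f₁ = P₀ f₂}`. -/
def Hrel (P₀ S₀ : X →ₗ.[ℂ] X) : Set (X × X) :=
  {f | ∃ (h₁ : f.1 ∈ S₀.domain) (h₂ : f.2 ∈ P₀.domain), S₀ ⟨f.1, h₁⟩ = P₀ ⟨f.2, h₂⟩}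

/-- Boundary triplet for `ran [P;S]`: `Γ = (Γ₀, Γ₁)` is surjective onto `G × G` and
the abstract Green identity holds. -/
structure IsBoundaryTriplet (P S : X →ₗ.[ℂ] X)
    (G : Type*) [NormedAddCommGroup G] [InnerProductSpace ℂ G]
    (Γ₀ Γ₁ : colDom P S →ₗ[ℂ] G) : Prop where
  surj : Function.Surjective fun x : colDom P S => (Γ₀ x, Γ₁ x)
  green : ∀ x y : colDom P S,
    ⟪Sap P S x, Pap P S y⟫ - ⟪Pap P S x, Sap P S y⟫ = ⟪Γ₁ x, Γ₀ y⟫ - ⟪Γ₀ x, Γ₁ y⟫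

/-- `ran A_Θ = {(Px, Sx) : x ∈ dom[P;S], (Γ₀ x, Γ₁ x) ∈ Θ}`. -/
def ranA (P S : X →ₗ.[ℂ] X) {G : Type*} [NormedAddCommGroup G] [InnerProductSpace ℂ G]
    (Γ₀ Γ₁ : colDom P S →ₗ[ℂ] G) (Θ : Set (G × G)) : Set (X × X) :=
  {p | ∃ x : colDom P S, (Γ₀ x, Γ₁ x) ∈ Θ ∧ p = (Pap P S x, Sap P S x)}

/-- The graph inner product `⟪Px, Py⟫ + ⟪Sx, Sy⟫` on `dom[P;S]`. -/
def gip (P S : X →ₗ.[ℂ] X) (x y : colDom P S) : ℂ :=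
  ⟪Pap P S x, Pap P S y⟫ + ⟪Sap P S x, Sap P S y⟫

/-- The squared graph norm `‖Px‖² + ‖Sx‖²` on `dom[P;S]`. -/
def gnormSq (P S : X →ₗ.[ℂ] X) (x : colDom P S) : ℝ :=
  ‖Pap P S x‖ ^ 2 + ‖Sap P S x‖ ^ 2


lemma Pap_sub {X : Type*} [NormedAddCommGroup X] [InnerProductSpace ℂ X]
    (P S : X →ₗ.[ℂ] X) (x y : colDom P S) :
    Pap P S (x - y) = Pap P S x - Pap P S y := by
  unfold Pap
  rw [← P.map_sub]
  rfl

lemma Sap_sub {X : Type*} [NormedAddCommGroup X] [InnerProductSpace ℂ X]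
    (P S : X →ₗ.[ℂ] X) (x y : colDom P S) :
    Sap P S (x - y) = Sap P S x - Sap P S y := by
  unfold Sap
  rw [← S.map_sub]
  rfl

/-- `ran A_Θ ⊆ ran A_{Θ'}` iff `Θ ⊆ Θ'`. -/
theorem ranA_subset_iff
    {G : Type*} [NormedAddCommGroup G] [InnerProductSpace ℂ G] [CompleteSpace G]
    (P₀ S₀ P S : X →ₗ.[ℂ] X)
    (hP₀ : Dense (P₀.domain : Set X)) (hS₀ : Dense (S₀.domain : Set X))
    (hP : P = P₀.adjoint) (hS : S = S₀.adjoint)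
    (hcoer : Coercive P S)
    (hsym : Hrel P₀ S₀ ⊆ relAdj (Hrel P₀ S₀))
    (Γ₀ Γ₁ : colDom P S →ₗ[ℂ] G)
    (hbt : IsBoundaryTriplet P S G Γ₀ Γ₁)
    (Θ Θ' : Submodule ℂ (G × G)) :
    ranA P S Γ₀ Γ₁ (Θ : Set (G × G)) ⊆ ranA P S Γ₀ Γ₁ (Θ' : Set (G × G)) ↔
      (Θ : Set (G × G)) ⊆ (Θ' : Set (G × G)) := by
  constructor
  · intro hsub
    rintro ⟨g₀, g₁⟩ hg
    obtain ⟨x, hx⟩ := hbt.surj (g₀, g₁)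
    simp only [] at hx
    have hmem : (Pap P S x, Sap P S x) ∈ ranA P S Γ₀ Γ₁ (Θ : Set (G × G)) :=
      ⟨x, by rw [hx]; exact hg, rfl⟩
    obtain ⟨y, hy, heq⟩ := hsub hmem
    obtain ⟨c, hc, hco⟩ := hcoer
    have hP1 : Pap P S x = Pap P S y := (Prod.ext_iff.mp heq).1
    have hS1 : Sap P S x = Sap P S y := (Prod.ext_iff.mp heq).2
    have hxy : x = y := by
      have h1 : Pap P S (x - y) = 0 := by rw [Pap_sub, hP1, sub_self]
      have h2 : Sap P S (x - y) = 0 := by rw [Sap_sub, hS1, sub_self]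
      have h3 := hco (x - y)
      rw [h1, h2] at h3
      simp only [norm_zero] at h3
      have h4 : ‖((x - y : colDom P S) : X)‖ ^ 2 = 0 := by
        nlinarith [pow_pos hc 2, sq_nonneg ‖((x - y : colDom P S) : X)‖]
      have h5 : ((x - y : colDom P S) : X) = 0 :=
        norm_eq_zero.mp (pow_eq_zero_iff two_ne_zero |>.mp h4)
      have h6 : (x - y : colDom P S) = 0 := Subtype.ext h5
      exact sub_eq_zero.mp h6
    rw [hxy] at hx
    rw [← hx]
    exact hy
  · intro hsub
    rintro p ⟨x, hx, rfl⟩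
    exact ⟨x, hsub hx, rfl⟩
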